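/- arXiv:1701.05363 — 7 statements merged into one kernel-verified Lean document; each statement's English description precedes it below -/
import Mathlib

section
/- Let (x_t)_{t≥1} be a sequence of nonnegative real numbers, let α ∈ [0,1), t₀ ∈ ℕ, and let u : ℝ × ℝ → ℝ satisfy: for every ε > 0 there exists M > 0 such that u(x, y) ≤ ε(x + y) whenever x + y ≥ M (i.e., u(x, y) = o(x + y) as x + y → ∞). If x_t ≤ α·x_{t−1} + u(x_t, x_{t−1}) for all t ≥ t₀, then the sequence (x_t)_{t≥1} is bounded. -/
/-- Deterministic bounded quasi-geometric sequences: a nonnegative sequence satisfying an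
approximate geometric contraction with an `o(x+y)` perturbation is bounded. -/
theorem bounded_quasi_geometric_deterministic
    (x : ℕ → ℝ) (hx : ∀ t, 0 ≤ x t)
    (α : ℝ) (hα0 : 0 ≤ α) (hα1 : α < 1) (t₀ : ℕ)
    (u : ℝ → ℝ → ℝ)
    (hu : ∀ ε > 0, ∃ M > 0, ∀ a b : ℝ, M ≤ a + b → u a b ≤ ε * (a + b))
    (hrec : ∀ t, t₀ ≤ t → x (t + 1) ≤ α * x t + u (x (t + 1)) (x t)) :
    BddAbove (Set.range x) := by
  set ε := (1 - α) / 3 with hε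
  have hε0 : 0 < ε := by rw [hε]; linarith
  have hε1 : ε < 1 := by
    have : 1 - α ≤ 1 := by linarith
    nlinarith
  obtain ⟨M, hM0, hMu⟩ := hu ε hε0
  -- key step lemma
  have key : ∀ t, t₀ ≤ t → x (t + 1) ≤ max (x t) M := by
    intro t ht
    rcases le_or_gt M (x (t + 1) + x t) with hsum | hsum
    · -- contraction case
      have h1 := hrec t ht
      have h2 := hMu (x (t + 1)) (x t) hsum
      have hx1 : (1 - ε) * x (t + 1) ≤ (α + ε) * x t := by nlinarith
      have hβ : x (t + 1) ≤ x t := by nlinarith [hx t, hx (t + 1)]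
      exact hβ.trans (le_max_left _ _)
    · have : x (t + 1) ≤ M := by nlinarith [hx t, hx (t + 1)]
      exact this.trans (le_max_right _ _)
  -- induction: for t ≥ t₀, x t ≤ max (x t₀) M
  have hind : ∀ t, t₀ ≤ t → x t ≤ max (x t₀) M := by
    intro t ht
    induction t with
    | zero =>
      have : t₀ = 0 := Nat.le_zero.mp ht
      simp [this]
    | succ n ih =>
      rcases Nat.lt_or_ge t₀ (n + 1) with h | h
      · have hn : t₀ ≤ n := Nat.lt_succ_iff.mp h
        have := key n hn
        have ihn := ih hn
        rcases le_max_iff.mp this with h1 | h1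
        · exact le_trans h1 ihn
        · exact h1.trans (le_max_right _ _)
      · have : t₀ = n + 1 := le_antisymm ht h
        simp [this]
  -- global bound
  have hne : (Finset.range (t₀ + 1)).Nonempty := ⟨0, by simp⟩
  refine ⟨max ((Finset.range (t₀ + 1)).sup' hne x) M, ?_⟩
  rintro _ ⟨t, rfl⟩
  rcases Nat.lt_or_ge t (t₀ + 1) with h | h
  · exact le_trans (Finset.le_sup' x (Finset.mem_range.mpr h)) (le_max_left _ _)
  · have ht : t₀ ≤ t := Nat.le_of_succ_le h
    have := hind t ht
    have h0 : x t₀ ≤ (Finset.range (t₀ + 1)).sup' hne x :=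
      Finset.le_sup' x (Finset.mem_range.mpr (Nat.lt_succ_self _))
    rcases le_max_iff.mp this with h1 | h1
    · exact le_trans (h1.trans h0) (le_max_left _ _)
    · exact h1.trans (le_max_right _ _)
end

section
/- Let Θ ⊆ ℝ^K be a nonempty closed convex set, ρ > 0, Q ≥ 0, and w ∈ [0,1]. Let ḡ₁ : ℝ^K → ℝ be continuous and ρ-strongly convex, let g : ℝ^K → ℝ be Q-Lipschitz on ℝ^K, and suppose ḡ₂ := (1−w)·ḡ₁ + w·g is also ρ-strongly convex. If θ₁* is the minimizer of ḡ₁ over Θ and θ₂* is the minimizer of ḡ₂ over Θ, then ‖θ₂* − θ₁*‖₂ ≤ 2·w·Q/ρ. -/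
/-!
Strong convexity of `ḡ₂` at its constrained minimizer `θ₂*` gives
`ρ/2 ‖θ₁* - θ₂*‖² ≤ ḡ₂ θ₁* - ḡ₂ θ₂*`. Since `θ₁*` minimizes `ḡ₁` over `Θ`, this gap is at most
`w (g θ₁* - g θ₂*) ≤ w Q ‖θ₁* - θ₂*‖`; dividing by `‖θ₁* - θ₂*‖` gives the bound.
-/

open Filter Set Topology

/-- Comparing `f x` with `f` on the segment `[x, y]` gives `f x + (1 - t) φ ‖y - x‖ ≤ f y`
for every `t ∈ (0, 1)`; let `t → 0⁺`. -/
lemma UniformConvexOn.add_le_of_isMinOn {E : Type*} [NormedAddCommGroup E] [NormedSpace ℝ E]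
    {s : Set E} {φ : ℝ → ℝ} {f : E → ℝ} {x y : E} (hf : UniformConvexOn s φ f)
    (hmin : IsMinOn f s x) (hx : x ∈ s) (hy : y ∈ s) :
    f x + φ ‖y - x‖ ≤ f y := by
  have hsegment : ∀ t ∈ Ioo (0 : ℝ) 1, f x + (1 - t) * φ ‖y - x‖ ≤ f y := by
    rintro t ⟨ht0, ht1⟩
    have hle_segment : f x ≤ f (t • y + (1 - t) • x) :=
      hmin (hf.1 hy hx ht0.le (sub_nonneg.2 ht1.le) (add_sub_cancel t 1))
    have hconv := hf.2 hy hx ht0.le (sub_nonneg.2 ht1.le) (add_sub_cancel t 1)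
    rw [smul_eq_mul, smul_eq_mul] at hconv
    refine le_of_mul_le_mul_left ?_ ht0
    nlinarith
  have hlim : Tendsto (fun t : ℝ => f x + (1 - t) * φ ‖y - x‖) (𝓝[>] 0)
      (𝓝 (f x + φ ‖y - x‖)) := by
    have : Continuous fun t : ℝ => f x + (1 - t) * φ ‖y - x‖ := by fun_prop
    simpa using this.continuousWithinAt.tendsto (x := 0) (s := Ioi 0)
  refine le_of_tendsto hlim ?_
  filter_upwards [Ioo_mem_nhdsGT one_pos] with t ht using hsegment t ht

theorem minimizer_displacement_general
    {K : ℕ} (Θ : Set (EuclideanSpace ℝ (Fin K)))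
    (hconv : Convex ℝ Θ)
    (ρ Q w : ℝ) (hρ : 0 < ρ) (hQ : 0 ≤ Q) (hw0 : 0 ≤ w) (hw1 : w ≤ 1)
    (g1 g : EuclideanSpace ℝ (Fin K) → ℝ)
    (hglip : ∀ x y : EuclideanSpace ℝ (Fin K), |g x - g y| ≤ Q * ‖x - y‖)
    (hg2sc : ConvexOn ℝ Set.univ
      (fun θ => ((1 - w) * g1 θ + w * g θ) - ρ / 2 * ‖θ‖ ^ 2))
    (θ1 θ2 : EuclideanSpace ℝ (Fin K)) (hθ1 : θ1 ∈ Θ) (hθ2 : θ2 ∈ Θ)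
    (hmin1 : ∀ θ ∈ Θ, g1 θ1 ≤ g1 θ)
    (hmin2 : ∀ θ ∈ Θ, (1 - w) * g1 θ2 + w * g θ2 ≤ (1 - w) * g1 θ + w * g θ) :
    ‖θ2 - θ1‖ ≤ 2 * w * Q / ρ := by
  set G := fun θ => (1 - w) * g1 θ + w * g θ
  have hG : StrongConvexOn Θ ρ G :=
    strongConvexOn_iff_convex.2 (hg2sc.subset (subset_univ Θ) hconv)
  have hgrowth : G θ2 + ρ / 2 * ‖θ1 - θ2‖ ^ 2 ≤ G θ1 :=
    hG.add_le_of_isMinOn hmin2 hθ2 hθ1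
  have hlip : G θ1 - G θ2 ≤ w * Q * ‖θ1 - θ2‖ := by
    have hg1 : (1 - w) * g1 θ1 ≤ (1 - w) * g1 θ2 :=
      mul_le_mul_of_nonneg_left (hmin1 θ2 hθ2) (by linarith)
    have hg : w * (g θ1 - g θ2) ≤ w * (Q * ‖θ1 - θ2‖) :=
      mul_le_mul_of_nonneg_left ((le_abs_self _).trans (hglip θ1 θ2)) hw0
    simp only [G]
    linarith
  rw [norm_sub_rev, le_div_iff₀ hρ]
  nlinarith [mul_nonneg hw0 hQ, norm_nonneg (θ1 - θ2)]

/-- Displacement of constrained minimizers of strongly convex aggregated surrogates under a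
convex-combination update with a Lipschitz function: `‖θ₂* − θ₁*‖ ≤ 2wQ/ρ`. -/
theorem minimizer_displacement
    {K : ℕ} (Θ : Set (EuclideanSpace ℝ (Fin K)))
    (hne : Θ.Nonempty) (hclosed : IsClosed Θ) (hconv : Convex ℝ Θ)
    (ρ Q w : ℝ) (hρ : 0 < ρ) (hQ : 0 ≤ Q) (hw0 : 0 ≤ w) (hw1 : w ≤ 1)
    (g1 g : EuclideanSpace ℝ (Fin K) → ℝ)
    (hg1cont : Continuous g1)
    (hg1sc : ConvexOn ℝ Set.univ (fun θ => g1 θ - ρ / 2 * ‖θ‖ ^ 2))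
    (hglip : ∀ x y : EuclideanSpace ℝ (Fin K), |g x - g y| ≤ Q * ‖x - y‖)
    (hg2sc : ConvexOn ℝ Set.univ
      (fun θ => ((1 - w) * g1 θ + w * g θ) - ρ / 2 * ‖θ‖ ^ 2))
    (θ1 θ2 : EuclideanSpace ℝ (Fin K)) (hθ1 : θ1 ∈ Θ) (hθ2 : θ2 ∈ Θ)
    (hmin1 : ∀ θ ∈ Θ, g1 θ1 ≤ g1 θ)
    (hmin2 : ∀ θ ∈ Θ, (1 - w) * g1 θ2 + w * g θ2 ≤ (1 - w) * g1 θ + w * g θ) :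
    ‖θ2 - θ1‖ ≤ 2 * w * Q / ρ :=
  minimizer_displacement_general Θ hconv ρ Q w hρ hQ hw0 hw1 g1 g hglip hg2sc θ1 θ2 hθ1 hθ2 hmin1
    hmin2
end

section
/- Let k ∈ ℕ, λ ≥ 0, ρ > 0, A > 0, and let Ω : ℝ^k → ℝ be convex and nonnegative. For a symmetric matrix G ∈ ℝ^{k×k} and β ∈ ℝ^k define ℓ(α; G, β) = (1/2)αᵀGα − αᵀβ + λΩ(α). Let G and G' be symmetric matrices with G ⪰ ρI and G' ⪰ ρI, and let β, β' ∈ ℝ^k. Suppose α is a minimizer of ℓ(·; G, β) over ℝ^k and α' is a minimizer of ℓ(·; G', β') over ℝ^k, with ‖α‖₂ ≤ A and ‖α'‖₂ ≤ A. Then ‖α − α'‖₂ ≤ (A/ρ)·‖G − G'‖_F + (1/ρ)·‖β − β'‖₂, where ‖·‖_F denotes the Frobenius norm. -/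
/-!
Both losses are `ρ`-strongly convex, so at a minimiser each loss grows at least like
`ρ/2 ‖α - α'‖²` towards the other minimiser. Adding the two growth inequalities, the penalty
terms cancel and `ρ ‖α - α'‖²` is bounded by the increment between `α` and `α'` of the difference
of the two losses, a quadratic form in `G - G'` plus a linear form in `β - β'`; on the ball of
radius `A` this increment is at most `(A ‖G - G'‖ + ‖β - β'‖) ‖α - α'‖`, where the operator norm
is dominated by the Frobenius norm.
-/

open Set Filter Topology Matrix
open scoped RealInnerProductSpace

section StrongConvexity

variable {E : Type*} [NormedAddCommGroup E] [NormedSpace ℝ E] {s : Set E} {f g : E → ℝ} {m : ℝ}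

lemma StrongConvexOn.add_convexOn (hf : StrongConvexOn s m f) (hg : ConvexOn ℝ s g) :
    StrongConvexOn s m (f + g) := by
  have h := hf.add hg.uniformConvexOn_zero
  rwa [add_zero] at h

lemma StrongConvexOn.add_sq_norm_sub_le_of_isMinOn {a b : E} (hf : StrongConvexOn s m f)
    (hmin : IsMinOn f s a) (ha : a ∈ s) (hb : b ∈ s) :
    f a + m / 2 * ‖b - a‖ ^ 2 ≤ f b := by
  -- compare `a` with `(1 - t) • a + t • b` and let `t → 0⁺`
  have hshrunk : ∀ t ∈ Ioo (0 : ℝ) 1, f a + (1 - t) * (m / 2 * ‖b - a‖ ^ 2) ≤ f b := by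
    rintro t ⟨ht0, ht1⟩
    have hconv := hf.2 ha hb (sub_nonneg.2 ht1.le) ht0.le (sub_add_cancel 1 t)
    have hmin_t :=
      isMinOn_iff.1 hmin _ (hf.1 ha hb (sub_nonneg.2 ht1.le) ht0.le (sub_add_cancel 1 t))
    rw [norm_sub_rev] at hconv
    simp only [smul_eq_mul] at hconv
    have hscaled : t * (f a + (1 - t) * (m / 2 * ‖b - a‖ ^ 2)) ≤ t * f b := by
      linear_combination hmin_t + hconv
    exact le_of_mul_le_mul_left hscaled ht0
  have hlim : Tendsto (fun t ↦ f a + (1 - t) * (m / 2 * ‖b - a‖ ^ 2)) (𝓝[>] 0)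
      (𝓝 (f a + m / 2 * ‖b - a‖ ^ 2)) :=
    (Continuous.tendsto' (by fun_prop) 0 _ (by simp)).mono_left nhdsWithin_le_nhds
  exact le_of_tendsto hlim (eventually_of_mem (Ioo_mem_nhdsGT one_pos) hshrunk)

theorem norm_sub_le_of_isMinOn_of_strongConvexOn {a b : E} {L : ℝ} (hm : 0 < m) (hL : 0 ≤ L)
    (hf : StrongConvexOn s m f) (hg : StrongConvexOn s m g) (has : a ∈ s) (hbs : b ∈ s)
    (ha : IsMinOn f s a) (hb : IsMinOn g s b)
    (hfg : (f b - g b) - (f a - g a) ≤ L * ‖a - b‖) :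
    ‖a - b‖ ≤ L / m := by
  have hfa := hf.add_sq_norm_sub_le_of_isMinOn ha has hbs
  have hgb := hg.add_sq_norm_sub_le_of_isMinOn hb hbs has
  rw [norm_sub_rev] at hfa
  have hsq : ‖a - b‖ * (‖a - b‖ * m) ≤ ‖a - b‖ * L := by linarith
  rw [le_div_iff₀ hm]
  rcases (norm_nonneg (a - b)).eq_or_lt with hzero | hpos
  · rw [← hzero, zero_mul]; exact hL
  · exact le_of_mul_le_mul_left hsq hpos

end StrongConvexity

section InnerProductSpace

variable {E : Type*} [NormedAddCommGroup E] [InnerProductSpace ℝ E]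

lemma strongConvexOn_half_inner_self_apply {T : E →L[ℝ] E} {m : ℝ}
    (hT : ∀ x, m * ‖x‖ ^ 2 ≤ ⟪x, T x⟫) :
    StrongConvexOn univ m fun x ↦ 1 / 2 * ⟪x, T x⟫ := by
  refine ⟨convex_univ, fun x _ y _ a b ha hb hab ↦ ?_⟩
  have hexpand : ⟪a • x + b • y, T (a • x + b • y)⟫
      = a * ⟪x, T x⟫ + b * ⟪y, T y⟫ - a * b * ⟪x - y, T (x - y)⟫ := by
    obtain rfl : b = 1 - a := by linarith
    simp only [map_add, map_sub, map_smul, inner_add_left, inner_add_right, inner_sub_left,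
      inner_sub_right, real_inner_smul_left, real_inner_smul_right]
    ring
  have hgap := mul_le_mul_of_nonneg_left (hT (x - y)) (mul_nonneg ha hb)
  dsimp only
  rw [hexpand, smul_eq_mul, smul_eq_mul]
  linarith

noncomputable def codeLoss (T : E →L[ℝ] E) (β : E) (lam : ℝ) (Ω : E → ℝ) (x : E) : ℝ :=
  1 / 2 * ⟪x, T x⟫ - ⟪x, β⟫ + lam * Ω x

lemma strongConvexOn_codeLoss {T : E →L[ℝ] E} {β : E} {lam m : ℝ} {Ω : E → ℝ}
    (hT : ∀ x, m * ‖x‖ ^ 2 ≤ ⟪x, T x⟫) (hlam : 0 ≤ lam) (hΩ : ConvexOn ℝ univ Ω) :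
    StrongConvexOn univ m (codeLoss T β lam Ω) := by
  have hlin := (-innerₛₗ ℝ β : E →ₗ[ℝ] ℝ).convexOn convex_univ
  have hsum :
      codeLoss T β lam Ω = (fun x ↦ 1 / 2 * ⟪x, T x⟫) + (⇑(-innerₛₗ ℝ β) + lam • Ω) := by
    ext x
    simp [codeLoss, real_inner_comm, sub_eq_add_neg, add_assoc]
  rw [hsum]
  exact (strongConvexOn_half_inner_self_apply hT).add_convexOn (hlin.add (hΩ.smul hlam))

lemma inner_map_self_sub_inner_map_self_le (D : E →L[ℝ] E) (x y : E) :
    ⟪y, D y⟫ - ⟪x, D x⟫ ≤ ‖D‖ * (‖x‖ + ‖y‖) * ‖x - y‖ := by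
  have hsplit : ⟪y, D y⟫ - ⟪x, D x⟫ = ⟪y - x, D y⟫ + ⟪x, D (y - x)⟫ := by
    simp only [map_sub, inner_sub_left, inner_sub_right]; ring
  calc ⟪y, D y⟫ - ⟪x, D x⟫ ≤ ‖y - x‖ * ‖D y‖ + ‖x‖ * ‖D (y - x)‖ := by
        rw [hsplit]; exact add_le_add (real_inner_le_norm _ _) (real_inner_le_norm _ _)
    _ ≤ ‖y - x‖ * (‖D‖ * ‖y‖) + ‖x‖ * (‖D‖ * ‖y - x‖) := by
        gcongr <;> exact D.le_opNorm _
    _ = ‖D‖ * (‖x‖ + ‖y‖) * ‖x - y‖ := by rw [norm_sub_rev]; ring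

theorem norm_sub_le_of_isMinOn_codeLoss {T T' : E →L[ℝ] E} {β β' a a' : E} {lam ρ A : ℝ}
    {Ω : E → ℝ} (hlam : 0 ≤ lam) (hρ : 0 < ρ) (hΩ : ConvexOn ℝ univ Ω)
    (hT : ∀ x, ρ * ‖x‖ ^ 2 ≤ ⟪x, T x⟫) (hT' : ∀ x, ρ * ‖x‖ ^ 2 ≤ ⟪x, T' x⟫)
    (ha : IsMinOn (codeLoss T β lam Ω) univ a) (ha' : IsMinOn (codeLoss T' β' lam Ω) univ a')
    (hA : ‖a‖ ≤ A) (hA' : ‖a'‖ ≤ A) :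
    ‖a - a'‖ ≤ (A * ‖T - T'‖ + ‖β - β'‖) / ρ := by
  have hA0 : 0 ≤ A := (norm_nonneg a).trans hA
  refine norm_sub_le_of_isMinOn_of_strongConvexOn hρ (by positivity)
    (strongConvexOn_codeLoss hT hlam hΩ) (strongConvexOn_codeLoss hT' hlam hΩ)
    (mem_univ a) (mem_univ a') ha ha' ?_
  have hquad := inner_map_self_sub_inner_map_self_le (T - T') a a'
  have hquad_le : ‖T - T'‖ * (‖a‖ + ‖a'‖) * ‖a - a'‖ ≤ ‖T - T'‖ * (2 * A) * ‖a - a'‖ := by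
    gcongr; linarith
  have hlin := real_inner_le_norm (a' - a) (β' - β)
  rw [norm_sub_rev a', norm_sub_rev β'] at hlin
  simp only [codeLoss, _root_.sub_apply, inner_sub_left, inner_sub_right] at hquad hlin ⊢
  linarith

end InnerProductSpace

section Frobenius

attribute [local instance] Matrix.frobeniusNormedAddCommGroup

lemma Matrix.norm_toEuclideanCLM_le_sqrt_sum_sq {n : Type*} [Fintype n] [DecidableEq n]
    (M : Matrix n n ℝ) : ‖toEuclideanCLM (𝕜 := ℝ) M‖ ≤ √(∑ i, ∑ j, M i j ^ 2) := by
  have hfrob : ‖M‖ = √(∑ i, ∑ j, M i j ^ 2) := by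
    simp [frobenius_norm_def, Real.sqrt_eq_rpow]
  refine ContinuousLinearMap.opNorm_le_bound _ (Real.sqrt_nonneg _) fun x ↦ ?_
  calc ‖toEuclideanCLM (𝕜 := ℝ) M x‖ = ‖M * replicateCol Unit (WithLp.ofLp x)‖ := by
        rw [← replicateCol_mulVec, frobenius_norm_replicateCol]; rfl
    _ ≤ ‖M‖ * ‖replicateCol Unit (WithLp.ofLp x)‖ := frobenius_norm_mul _ _
    _ = √(∑ i, ∑ j, M i j ^ 2) * ‖x‖ := by rw [frobenius_norm_replicateCol, hfrob]

end Frobenius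

theorem code_lipschitz_in_parameters_general
    {k : ℕ} (lam ρ A : ℝ) (hlam : 0 ≤ lam) (hρ : 0 < ρ)
    (Om : EuclideanSpace ℝ (Fin k) → ℝ)
    (hOmconv : ConvexOn ℝ Set.univ Om)
    (G G' : Matrix (Fin k) (Fin k) ℝ)
    (hG : ∀ a : EuclideanSpace ℝ (Fin k), ρ * ‖a‖ ^ 2 ≤ ∑ i, ∑ j, a i * G i j * a j)
    (hG' : ∀ a : EuclideanSpace ℝ (Fin k), ρ * ‖a‖ ^ 2 ≤ ∑ i, ∑ j, a i * G' i j * a j)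
    (β β' : EuclideanSpace ℝ (Fin k)) (a a' : EuclideanSpace ℝ (Fin k))
    (ha : ∀ b : EuclideanSpace ℝ (Fin k),
      (1 / 2) * (∑ i, ∑ j, a i * G i j * a j) - (∑ i, a i * β i) + lam * Om a ≤
      (1 / 2) * (∑ i, ∑ j, b i * G i j * b j) - (∑ i, b i * β i) + lam * Om b)
    (ha' : ∀ b : EuclideanSpace ℝ (Fin k),
      (1 / 2) * (∑ i, ∑ j, a' i * G' i j * a' j) - (∑ i, a' i * β' i) + lam * Om a' ≤
      (1 / 2) * (∑ i, ∑ j, b i * G' i j * b j) - (∑ i, b i * β' i) + lam * Om b)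
    (hnorm : ‖a‖ ≤ A) (hnorm' : ‖a'‖ ≤ A) :
    ‖a - a'‖ ≤
      A / ρ * Real.sqrt (∑ i, ∑ j, (G i j - G' i j) ^ 2) + (1 / ρ) * ‖β - β'‖ := by
  have hquad (M : Matrix (Fin k) (Fin k) ℝ) (x : EuclideanSpace ℝ (Fin k)) :
      ∑ i, ∑ j, x i * M i j * x j = ⟪x, toEuclideanCLM (𝕜 := ℝ) M x⟫ := by
    simp [inner_toEuclideanCLM, dotProduct, mulVec, Finset.mul_sum, mul_assoc]
  have hlin (x y : EuclideanSpace ℝ (Fin k)) : ∑ i, x i * y i = ⟪x, y⟫ := by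
    simp [PiLp.inner_apply, mul_comm]
  simp only [hquad, hlin] at hG hG' ha ha'
  have hlip := norm_sub_le_of_isMinOn_codeLoss hlam hρ hOmconv hG hG'
    (isMinOn_univ_iff.2 ha) (isMinOn_univ_iff.2 ha') hnorm hnorm'
  have hfrob := norm_toEuclideanCLM_le_sqrt_sum_sq (G - G')
  rw [map_sub] at hfrob
  simp only [Matrix.sub_apply] at hfrob
  have hA0 : 0 ≤ A := (norm_nonneg a).trans hnorm
  calc ‖a - a'‖ ≤ _ := hlip
    _ ≤ (A * √(∑ i, ∑ j, (G i j - G' i j) ^ 2) + ‖β - β'‖) / ρ := by gcongr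
    _ = A / ρ * √(∑ i, ∑ j, (G i j - G' i j) ^ 2) + 1 / ρ * ‖β - β'‖ := by ring

/-- Lipschitz continuity of the minimizer of `α ↦ (1/2)αᵀGα − αᵀβ + λΩ(α)` in the
parameters `(G, β)`: `‖α − α'‖ ≤ (A/ρ)‖G − G'‖_F + (1/ρ)‖β − β'‖`. -/
theorem code_lipschitz_in_parameters
    {k : ℕ} (lam ρ A : ℝ) (hlam : 0 ≤ lam) (hρ : 0 < ρ) (hA : 0 < A)
    (Om : EuclideanSpace ℝ (Fin k) → ℝ)
    (hOmconv : ConvexOn ℝ Set.univ Om) (hOmpos : ∀ a, 0 ≤ Om a)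
    (G G' : Matrix (Fin k) (Fin k) ℝ) (hGsymm : G.IsSymm) (hG'symm : G'.IsSymm)
    (hG : ∀ a : EuclideanSpace ℝ (Fin k), ρ * ‖a‖ ^ 2 ≤ ∑ i, ∑ j, a i * G i j * a j)
    (hG' : ∀ a : EuclideanSpace ℝ (Fin k), ρ * ‖a‖ ^ 2 ≤ ∑ i, ∑ j, a i * G' i j * a j)
    (β β' : EuclideanSpace ℝ (Fin k)) (a a' : EuclideanSpace ℝ (Fin k))
    (ha : ∀ b : EuclideanSpace ℝ (Fin k),
      (1 / 2) * (∑ i, ∑ j, a i * G i j * a j) - (∑ i, a i * β i) + lam * Om a ≤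
      (1 / 2) * (∑ i, ∑ j, b i * G i j * b j) - (∑ i, b i * β i) + lam * Om b)
    (ha' : ∀ b : EuclideanSpace ℝ (Fin k),
      (1 / 2) * (∑ i, ∑ j, a' i * G' i j * a' j) - (∑ i, a' i * β' i) + lam * Om a' ≤
      (1 / 2) * (∑ i, ∑ j, b i * G' i j * b j) - (∑ i, b i * β' i) + lam * Om b)
    (hnorm : ‖a‖ ≤ A) (hnorm' : ‖a'‖ ≤ A) :
    ‖a - a'‖ ≤
      A / ρ * Real.sqrt (∑ i, ∑ j, (G i j - G' i j) ^ 2) + (1 / ρ) * ‖β - β'‖ :=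
  code_lipschitz_in_parameters_general lam ρ A hlam hρ Om hOmconv G G' hG hG' β β' a a' ha ha' hnorm
    hnorm'
end

section
/- Let u ∈ (0,1] and define w_t = t^{−u} for integers t ≥ 1. Then: (i) for all integers 1 ≤ i ≤ t, w_i · ∏_{j=i+1}^{t} (1 − w_j) ≤ w_t; (ii) consequently, for any sequence (ε_t)_{t≥1} of nonnegative reals, the recursively defined averages ε̄_1 = ε_1 and ε̄_t = (1 − w_t)·ε̄_{t−1} + w_t·ε_t satisfy ε̄_t ≤ w_t · ∑_{i=1}^{t} ε_i for all t ≥ 1. -/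
private lemma wpos' (u : ℝ) (hu0 : 0 < u) {t : ℕ} (ht : 1 ≤ t) :
    0 < (t : ℝ) ^ (-u) := by
  apply Real.rpow_pos_of_pos
  exact_mod_cast Nat.lt_of_lt_of_le Nat.zero_lt_one ht

private lemma wle1' (u : ℝ) (hu0 : 0 < u) {t : ℕ} (ht : 1 ≤ t) :
    (t : ℝ) ^ (-u) ≤ 1 := by
  apply Real.rpow_le_one_of_one_le_of_nonpos
  · exact_mod_cast ht
  · linarith

/-- Key step: `w t * (1 - w (t+1)) ≤ w (t+1)` for `t ≥ 1`. -/
private lemma key_step (u : ℝ) (hu0 : 0 < u) (hu1 : u ≤ 1) {t : ℕ} (ht : 1 ≤ t) :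
    (t : ℝ) ^ (-u) * (1 - ((t : ℝ) + 1) ^ (-u)) ≤ ((t : ℝ) + 1) ^ (-u) := by
  have htpos : (0 : ℝ) < t := by exact_mod_cast Nat.lt_of_lt_of_le Nat.zero_lt_one ht
  have ht1pos : (0 : ℝ) < (t : ℝ) + 1 := by linarith
  -- reduce to (t+1)^u - 1 ≤ t^u
  have hsub : ((t : ℝ) + 1) ^ u ≤ (t : ℝ) ^ u + 1 := by
    have h := NNReal.rpow_add_le_add_rpow (Real.toNNReal t) 1 hu0.le hu1
    have h' := NNReal.coe_le_coe.2 h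
    push_cast [NNReal.coe_rpow, Real.coe_toNNReal _ htpos.le] at h'
    simpa using h'
  have hA : (t : ℝ) ^ (-u) = ((t : ℝ) ^ u)⁻¹ := by rw [Real.rpow_neg htpos.le]
  have hB : ((t : ℝ) + 1) ^ (-u) = (((t : ℝ) + 1) ^ u)⁻¹ := by rw [Real.rpow_neg ht1pos.le]
  have hApos : (0 : ℝ) < (t : ℝ) ^ u := Real.rpow_pos_of_pos htpos u
  have hBpos : (0 : ℝ) < ((t : ℝ) + 1) ^ u := Real.rpow_pos_of_pos ht1pos u
  set A := (t : ℝ) ^ u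
  set B := ((t : ℝ) + 1) ^ u
  have hcalc : A⁻¹ * (1 - B⁻¹) = (B - 1) / (A * B) := by
    field_simp
  have hBrw : B⁻¹ = A / (A * B) := by field_simp
  rw [hA, hB, hcalc, hBrw]
  apply div_le_div_of_nonneg_right (by linarith) (by positivity)

/-- For the weights `w_t = t^{−u}` with `u ∈ (0,1]`: (i) the aggregation weights
`w_i^t = w_i ∏_{j=i+1}^t (1 − w_j)` are bounded by `w_t`; (ii) hence the recursive averages
`ε̄_t` satisfy `ε̄_t ≤ w_t ∑_{i=1}^t ε_i`. -/
theorem aggregation_weights_bound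
    (u : ℝ) (hu0 : 0 < u) (hu1 : u ≤ 1)
    (w : ℕ → ℝ) (hw : ∀ t, w t = (t : ℝ) ^ (-u)) :
    (∀ i t : ℕ, 1 ≤ i → i ≤ t →
      w i * ∏ j ∈ Finset.Icc (i + 1) t, (1 - w j) ≤ w t) ∧
    (∀ ε : ℕ → ℝ, (∀ t, 0 ≤ ε t) →
      ∀ ebar : ℕ → ℝ, ebar 1 = ε 1 →
      (∀ t, 2 ≤ t → ebar t = (1 - w t) * ebar (t - 1) + w t * ε t) →
      ∀ t, 1 ≤ t → ebar t ≤ w t * ∑ i ∈ Finset.Icc 1 t, ε i) := by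
  have hwpos : ∀ t : ℕ, 1 ≤ t → 0 < w t := fun t ht => by
    rw [hw]; exact wpos' u hu0 ht
  have hwle1 : ∀ t : ℕ, 1 ≤ t → w t ≤ 1 := fun t ht => by
    rw [hw]; exact wle1' u hu0 ht
  have hkey : ∀ t : ℕ, 1 ≤ t → w t * (1 - w (t + 1)) ≤ w (t + 1) := by
    intro t ht
    rw [hw t, hw (t + 1)]
    push_cast
    exact key_step u hu0 hu1 ht
  have part1 : ∀ i t : ℕ, 1 ≤ i → i ≤ t →
      w i * ∏ j ∈ Finset.Icc (i + 1) t, (1 - w j) ≤ w t := by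
    intro i t hi hit
    induction t with
    | zero => omega
    | succ n ih =>
      rcases Nat.lt_or_ge i (n + 1) with h | h
      · have hin : i ≤ n := by omega
        have hn1 : 1 ≤ n := le_trans hi hin
        rw [Finset.prod_Icc_succ_top (by omega : i + 1 ≤ n + 1)]
        have h1w : 0 ≤ 1 - w (n + 1) := by
          have := hwle1 (n + 1) (by omega); linarith
        calc w i * ((∏ j ∈ Finset.Icc (i + 1) n, (1 - w j)) * (1 - w (n + 1)))
            = (w i * ∏ j ∈ Finset.Icc (i + 1) n, (1 - w j)) * (1 - w (n + 1)) := by ring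
          _ ≤ w n * (1 - w (n + 1)) := by
              apply mul_le_mul_of_nonneg_right (ih hin) h1w
          _ ≤ w (n + 1) := hkey n hn1
      · have : i = n + 1 := by omega
        subst this
        simp
  refine ⟨part1, ?_⟩
  intro ε hε ebar h1 hrec t ht
  induction t with
  | zero => omega
  | succ n ih =>
    rcases Nat.lt_or_ge n 1 with h | h
    · have : n = 0 := by omega
      subst this
      have hw1 : w 1 = 1 := by rw [hw]; simp
      simp [h1, hw1]
    · have hrecn := hrec (n + 1) (by omega)
      simp only [Nat.add_sub_cancel] at hrecn
      have hSn : 0 ≤ ∑ i ∈ Finset.Icc 1 n, ε i := Finset.sum_nonneg fun i _ => hε i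
      have h1w : 0 ≤ 1 - w (n + 1) := by
        have := hwle1 (n + 1) (by omega); linarith
      have hsum : ∑ i ∈ Finset.Icc 1 (n + 1), ε i
          = (∑ i ∈ Finset.Icc 1 n, ε i) + ε (n + 1) := by
        rw [Finset.sum_Icc_succ_top (by omega : 1 ≤ n + 1)]
      calc ebar (n + 1) = (1 - w (n + 1)) * ebar n + w (n + 1) * ε (n + 1) := hrecn
        _ ≤ (1 - w (n + 1)) * (w n * ∑ i ∈ Finset.Icc 1 n, ε i)
            + w (n + 1) * ε (n + 1) := by
            have := ih h
            nlinarith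
        _ ≤ w (n + 1) * (∑ i ∈ Finset.Icc 1 n, ε i) + w (n + 1) * ε (n + 1) := by
            have hk := hkey n h
            nlinarith
        _ = w (n + 1) * ∑ i ∈ Finset.Icc 1 (n + 1), ε i := by rw [hsum]; ring
end

section
/- Let u ∈ (3/4, 1), η ∈ (0, 2u − 1), K > 0, and w_t = t^{−u} for integers t ≥ 1. Let (e_t)_{t≥1} be nonnegative reals with e_t ≤ K·t^{2(u−1)−η} for all t ≥ 1, and define ē_1 = e_1 and ē_t = (1 − w_t)·ē_{t−1} + w_t·e_t. Then there exists a constant C > 0 such that w_t·(ē_{t−1} + e_t) ≤ C·t^{−1−η} for all t ≥ 2; in particular the series ∑_{t≥2} w_t·(ē_{t−1} + e_t) converges. -/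
open Finset Real

/-!
Write `p = 2u - 1 - η ∈ (0, 1]`, so that `e_t ≤ K t^{p-1}`. Subadditivity `(t + 1)^u ≤ t^u + 1`
says `(1 - w_{t+1}) w_t ≤ w_{t+1}`, and with it an induction on the recursion gives
`ē_t ≤ w_t ∑_{i ≤ t} e_i`. Concavity of `x ↦ x^p` gives `p t^{p-1} ≤ t^p - (t - 1)^p`, which
telescopes to `∑_{i ≤ t} e_i ≤ (K / p) t^p`. Hence `ē_{t-1} = O(t^{p-u})`, and
`w_t (ē_{t-1} + e_t) = O(t^{p-2u}) = O(t^{-1-η})` is summable since `η > 0`.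
-/

lemma sub_one_rpow_le {x p : ℝ} (hx : 1 ≤ x) (hp0 : 0 ≤ p) (hp1 : p ≤ 1) :
    (x - 1) ^ p ≤ x ^ p - p * x ^ (p - 1) := by
  have hx0 : 0 < x := by linarith
  have hs : -1 ≤ -x⁻¹ := neg_le_neg (inv_le_one_of_one_le₀ hx)
  calc (x - 1) ^ p = x ^ p * (1 + -x⁻¹) ^ p := by
        rw [← mul_rpow hx0.le (by linarith), mul_add, mul_neg, mul_inv_cancel₀ hx0.ne']; ring_nf
    _ ≤ x ^ p * (1 + p * -x⁻¹) :=
        mul_le_mul_of_nonneg_left (rpow_one_add_le_one_add_mul_self hs hp0 hp1) (by positivity)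
    _ = x ^ p - p * x ^ (p - 1) := by rw [rpow_sub_one hx0.ne']; ring

lemma sum_Icc_rpow_sub_one_le {p : ℝ} (hp0 : 0 < p) (hp1 : p ≤ 1) (t : ℕ) :
    ∑ i ∈ Icc 1 t, (i : ℝ) ^ (p - 1) ≤ (t : ℝ) ^ p / p := by
  induction t with
  | zero => simp [zero_rpow hp0.ne']
  | succ t ih =>
    have hstep := sub_one_rpow_le (x := (t : ℝ) + 1) (by linarith [t.cast_nonneg (α := ℝ)])
      hp0.le hp1
    rw [add_sub_cancel_right] at hstep
    rw [sum_Icc_succ_top (by omega), Nat.cast_succ, le_div_iff₀ hp0]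
    rw [le_div_iff₀ hp0] at ih
    nlinarith

lemma one_sub_rpow_neg_mul_le {u x : ℝ} (hu0 : 0 ≤ u) (hu1 : u ≤ 1) (hx : 0 < x) :
    (1 - (x + 1) ^ (-u)) * x ^ (-u) ≤ (x + 1) ^ (-u) := by
  have hsub : (x + 1) ^ u ≤ x ^ u + 1 := by
    simpa using rpow_add_le_add_rpow hx.le zero_le_one hu0 hu1
  have ha : 0 < (x + 1) ^ u := by positivity
  have hb : 0 < x ^ u := by positivity
  rw [rpow_neg (by linarith), rpow_neg hx.le]
  field_simp
  linarith

lemma sub_one_rpow_le_two_rpow_mul {x q : ℝ} (hx : 2 ≤ x) (hq : q ≤ 0) :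
    (x - 1) ^ q ≤ 2 ^ (-q) * x ^ q := by
  calc (x - 1) ^ q ≤ (x / 2) ^ q := rpow_le_rpow_of_nonpos (by linarith) (by linarith) hq
    _ = 2 ^ (-q) * x ^ q := by
        rw [div_rpow (by linarith) zero_le_two, rpow_neg zero_le_two]; ring

lemma natCast_rpow_neg_mem_Icc {u : ℝ} (hu : 0 ≤ u) {t : ℕ} (ht : 1 ≤ t) :
    (t : ℝ) ^ (-u) ∈ Set.Icc 0 1 :=
  ⟨by positivity, rpow_le_one_of_one_le_of_nonpos (by exact_mod_cast ht) (by linarith)⟩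

def IsRecursiveAverage (w e ebar : ℕ → ℝ) : Prop :=
  ebar 1 = e 1 ∧ ∀ t, 2 ≤ t → ebar t = (1 - w t) * ebar (t - 1) + w t * e t

namespace IsRecursiveAverage

variable {u p K : ℝ} {w e ebar : ℕ → ℝ}

lemma succ (h : IsRecursiveAverage w e ebar) {t : ℕ} (ht : 1 ≤ t) :
    ebar (t + 1) = (1 - w (t + 1)) * ebar t + w (t + 1) * e (t + 1) :=
  h.2 (t + 1) (by omega)

lemma nonneg (h : IsRecursiveAverage w e ebar) (hw : ∀ t, 2 ≤ t → w t ∈ Set.Icc 0 1)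
    (he : ∀ t, 0 ≤ e t) {t : ℕ} (ht : 1 ≤ t) : 0 ≤ ebar t := by
  induction t, ht using Nat.le_induction with
  | base => exact h.1 ▸ he 1
  | succ t ht ih =>
    obtain ⟨hw0, hw1⟩ := hw (t + 1) (by omega)
    rw [h.succ ht]
    have he' := he (t + 1)
    have hw' : 0 ≤ 1 - w (t + 1) := by linarith
    positivity

lemma le_mul_sum (h : IsRecursiveAverage w e ebar) (hw1 : w 1 = 1)
    (hw : ∀ t, 2 ≤ t → w t ≤ 1) (hmono : ∀ t, 1 ≤ t → (1 - w (t + 1)) * w t ≤ w (t + 1))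
    (he : ∀ t, 0 ≤ e t) {t : ℕ} (ht : 1 ≤ t) : ebar t ≤ w t * ∑ i ∈ Icc 1 t, e i := by
  induction t, ht using Nat.le_induction with
  | base => simp [h.1, hw1]
  | succ t ht ih =>
    have hS : 0 ≤ ∑ i ∈ Icc 1 t, e i := sum_nonneg fun i _ ↦ he i
    have hw' : 0 ≤ 1 - w (t + 1) := by linarith [hw (t + 1) (by omega)]
    calc ebar (t + 1) = (1 - w (t + 1)) * ebar t + w (t + 1) * e (t + 1) := h.succ ht
      _ ≤ (1 - w (t + 1)) * w t * ∑ i ∈ Icc 1 t, e i + w (t + 1) * e (t + 1) := by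
          rw [mul_assoc]; gcongr
      _ ≤ w (t + 1) * ∑ i ∈ Icc 1 t, e i + w (t + 1) * e (t + 1) := by
          gcongr; exact hmono t ht
      _ = w (t + 1) * ∑ i ∈ Icc 1 (t + 1), e i := by
          rw [sum_Icc_succ_top (by omega), mul_add]

lemma le_rpow (h : IsRecursiveAverage w e ebar) (hw : ∀ t, w t = (t : ℝ) ^ (-u))
    (hu0 : 0 ≤ u) (hu1 : u ≤ 1) (hp0 : 0 < p) (hp1 : p ≤ 1) (hK : 0 ≤ K) (he : ∀ t, 0 ≤ e t)
    (hebd : ∀ t : ℕ, 1 ≤ t → e t ≤ K * (t : ℝ) ^ (p - 1)) {t : ℕ} (ht : 1 ≤ t) :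
    ebar t ≤ K / p * (t : ℝ) ^ (p - u) := by
  have hw1 : ∀ t, 2 ≤ t → w t ≤ 1 := fun t ht ↦
    hw t ▸ (natCast_rpow_neg_mem_Icc hu0 (by omega : 1 ≤ t)).2
  have hmono : ∀ t : ℕ, 1 ≤ t → (1 - w (t + 1)) * w t ≤ w (t + 1) := fun t ht ↦ by
    simpa only [hw, Nat.cast_succ] using
      one_sub_rpow_neg_mul_le hu0 hu1 (by exact_mod_cast ht : (0 : ℝ) < t)
  have hS : ∑ i ∈ Icc 1 t, e i ≤ K * ((t : ℝ) ^ p / p) :=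
    calc ∑ i ∈ Icc 1 t, e i ≤ ∑ i ∈ Icc 1 t, K * (i : ℝ) ^ (p - 1) :=
          sum_le_sum fun i hi ↦ hebd i (mem_Icc.1 hi).1
      _ = K * ∑ i ∈ Icc 1 t, (i : ℝ) ^ (p - 1) := by rw [mul_sum]
      _ ≤ K * ((t : ℝ) ^ p / p) := by gcongr; exact sum_Icc_rpow_sub_one_le hp0 hp1 t
  have ht0 : (0 : ℝ) < t := by exact_mod_cast ht
  calc ebar t ≤ w t * ∑ i ∈ Icc 1 t, e i := h.le_mul_sum (by simp [hw]) hw1 hmono he ht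
    _ ≤ (t : ℝ) ^ (-u) * (K * ((t : ℝ) ^ p / p)) := by rw [hw]; gcongr
    _ = K / p * (t : ℝ) ^ (p - u) := by rw [sub_eq_neg_add, rpow_add ht0]; ring

lemma rpow_weight_mul_le (h : IsRecursiveAverage w e ebar) (hw : ∀ t, w t = (t : ℝ) ^ (-u))
    (hu0 : 0 ≤ u) (hu1 : u ≤ 1) (hp0 : 0 < p) (hp1 : p ≤ 1) (hpu : p ≤ u) (hK : 0 ≤ K)
    (he : ∀ t, 0 ≤ e t) (hebd : ∀ t : ℕ, 1 ≤ t → e t ≤ K * (t : ℝ) ^ (p - 1))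
    {t : ℕ} (ht : 2 ≤ t) :
    w t * (ebar (t - 1) + e t) ≤ (K / p * 2 ^ (u - p) + K) * (t : ℝ) ^ (p - 2 * u) := by
  have ht2 : (2 : ℝ) ≤ t := by exact_mod_cast ht
  have ht0 : (0 : ℝ) < t := by linarith
  have hprev : ebar (t - 1) ≤ K / p * (2 ^ (u - p) * (t : ℝ) ^ (p - u)) :=
    calc ebar (t - 1) ≤ K / p * ((t - 1 : ℕ) : ℝ) ^ (p - u) :=
          h.le_rpow hw hu0 hu1 hp0 hp1 hK he hebd (by omega)
      _ ≤ K / p * (2 ^ (u - p) * (t : ℝ) ^ (p - u)) := by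
          rw [Nat.cast_sub (by omega), Nat.cast_one]
          gcongr
          simpa using sub_one_rpow_le_two_rpow_mul ht2 (by linarith : p - u ≤ 0)
  have hcur : (t : ℝ) ^ (p - 1 - u) ≤ (t : ℝ) ^ (p - 2 * u) :=
    rpow_le_rpow_of_exponent_le (by linarith) (by linarith)
  calc w t * (ebar (t - 1) + e t)
      ≤ (t : ℝ) ^ (-u) *
          (K / p * (2 ^ (u - p) * (t : ℝ) ^ (p - u)) + K * (t : ℝ) ^ (p - 1)) := by
        rw [hw]; gcongr; exact hebd t (by omega)
    _ = K / p * 2 ^ (u - p) * (t : ℝ) ^ (p - 2 * u) + K * (t : ℝ) ^ (p - 1 - u) := by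
        rw [show p - 2 * u = -u + (p - u) by ring, show p - 1 - u = -u + (p - 1) by ring,
          rpow_add ht0, rpow_add ht0]
        ring
    _ ≤ (K / p * 2 ^ (u - p) + K) * (t : ℝ) ^ (p - 2 * u) := by
        rw [add_mul]; gcongr

end IsRecursiveAverage

theorem perturbation_summable_general
    (u η K : ℝ) (hu1 : u < 1) (hη0 : 0 < η) (hη1 : η < 2 * u - 1)
    (hK : 0 < K)
    (w : ℕ → ℝ) (hw : ∀ t, w t = (t : ℝ) ^ (-u))
    (e : ℕ → ℝ) (he0 : ∀ t, 0 ≤ e t)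
    (hebd : ∀ t : ℕ, 1 ≤ t → e t ≤ K * (t : ℝ) ^ (2 * (u - 1) - η))
    (ebar : ℕ → ℝ) (h1 : ebar 1 = e 1)
    (hrec : ∀ t, 2 ≤ t → ebar t = (1 - w t) * ebar (t - 1) + w t * e t) :
    (∃ C > 0, ∀ t : ℕ, 2 ≤ t →
      w t * (ebar (t - 1) + e t) ≤ C * (t : ℝ) ^ (-1 - η)) ∧
    Summable (fun t : ℕ => w (t + 2) * (ebar (t + 1) + e (t + 2))) := by
  have hu0 : 0 ≤ u := by linarith
  have hp0 : 0 < 2 * u - 1 - η := by linarith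
  have hav : IsRecursiveAverage w e ebar := ⟨h1, hrec⟩
  have hebd' : ∀ t : ℕ, 1 ≤ t → e t ≤ K * (t : ℝ) ^ ((2 * u - 1 - η) - 1) := fun t ht ↦ by
    convert hebd t ht using 3; ring
  have hbound : ∀ t : ℕ, 2 ≤ t → w t * (ebar (t - 1) + e t) ≤
      (K / (2 * u - 1 - η) * 2 ^ (u - (2 * u - 1 - η)) + K) * (t : ℝ) ^ (-1 - η) := by
    intro t ht
    convert hav.rpow_weight_mul_le hw hu0 hu1.le hp0 (by linarith) (by linarith) hK.le he0
      hebd' ht using 3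
    ring
  have hw_mem : ∀ t, 2 ≤ t → w t ∈ Set.Icc 0 1 := fun t ht ↦
    hw t ▸ natCast_rpow_neg_mem_Icc hu0 (by omega)
  have hterm_nonneg : ∀ t : ℕ, 0 ≤ w (t + 2) * (ebar (t + 1) + e (t + 2)) := fun t ↦
    mul_nonneg (hw_mem (t + 2) (by omega)).1
      (add_nonneg (hav.nonneg hw_mem he0 (by omega)) (he0 _))
  refine ⟨⟨_, by positivity, hbound⟩,
    .of_nonneg_of_le hterm_nonneg (fun t ↦ hbound (t + 2) (by omega)) ?_⟩
  exact ((summable_nat_add_iff 2).mpr (summable_nat_rpow.mpr (by linarith))).mul_left _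

/-- Summability of the perturbation terms: if `e_t ≤ K t^{2(u−1)−η}` and `ē_t` are the
`w_t = t^{−u}` recursive averages, then `w_t (ē_{t−1} + e_t) ≤ C t^{−1−η}`, so the series
`∑_{t≥2} w_t (ē_{t−1} + e_t)` converges. -/
theorem perturbation_summable
    (u η K : ℝ) (hu : 3 / 4 < u) (hu1 : u < 1) (hη0 : 0 < η) (hη1 : η < 2 * u - 1)
    (hK : 0 < K)
    (w : ℕ → ℝ) (hw : ∀ t, w t = (t : ℝ) ^ (-u))
    (e : ℕ → ℝ) (he0 : ∀ t, 0 ≤ e t)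
    (hebd : ∀ t : ℕ, 1 ≤ t → e t ≤ K * (t : ℝ) ^ (2 * (u - 1) - η))
    (ebar : ℕ → ℝ) (h1 : ebar 1 = e 1)
    (hrec : ∀ t, 2 ≤ t → ebar t = (1 - w t) * ebar (t - 1) + w t * e t) :
    (∃ C > 0, ∀ t : ℕ, 2 ≤ t →
      w t * (ebar (t - 1) + e t) ≤ C * (t : ℝ) ^ (-1 - η)) ∧
    Summable (fun t : ℕ => w (t + 2) * (ebar (t + 1) + e (t + 2))) :=
  perturbation_summable_general u η K hu1 hη0 hη1 hK w hw e he0 hebd ebar h1 hrec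
end

section
/- Let (γ_b)_{b≥1} be a nonincreasing sequence of reals in (0,1]. Then for all integers 1 ≤ d ≤ c: ∑_{b=1}^{d} γ_b · ∏_{p=b+1}^{c} (1 − γ_p) ≤ (1 − γ_c)^{c−d} / γ_c. Moreover, if γ_c = c^{−v} with v ∈ (0,1) and ν ∈ (v, 1), then for all c large enough that d_c := c − ⌊c^ν⌋ ≥ 1, one has ∑_{b=1}^{d_c} γ_b · ∏_{p=b+1}^{c} (1 − γ_p) ≤ e · c^v · exp(−c^{ν−v}), and in particular this sum tends to 0 as c → ∞ faster than any power of c. -/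
/-!
Splitting `∏_{p=b+1}^{c}` at `d` factors the weight as
`(∑_{b ≤ d} γ_b ∏_{b<p≤d} (1 - γ_p)) · ∏_{d<p≤c} (1 - γ_p)`. The first factor telescopes to
`1 - ∏_{p ≤ d} (1 - γ_p) ≤ 1`, and since `γ` is nonincreasing the second is at most
`(1 - γ_c)^{c-d}`. For `γ_c = c^{-v}` and `c - d = ⌊c^ν⌋`, the bound `1 - x ≤ e^{-x}` turns
`(1 - γ_c)^{c-d}` into `exp(1 - c^{ν-v})`, which beats every power of `c`.
-/

open Finset Filter Topology Real

def oldIteratesWeight (γ : ℕ → ℝ) (d c : ℕ) : ℝ :=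
  ∑ b ∈ Icc 1 d, γ b * ∏ q ∈ Icc (b + 1) c, (1 - γ q)

theorem sum_mul_prod_Ioc_one_sub {R : Type*} [CommRing R] (γ : ℕ → R) (d : ℕ) :
    ∑ b ∈ Icc 1 d, γ b * ∏ q ∈ Ioc b d, (1 - γ q) = 1 - ∏ q ∈ Icc 1 d, (1 - γ q) := by
  induction d with
  | zero => simp
  | succ d ih =>
    have hstep : ∀ b ∈ Icc 1 d, γ b * ∏ q ∈ Ioc b (d + 1), (1 - γ q) =
        (γ b * ∏ q ∈ Ioc b d, (1 - γ q)) * (1 - γ (d + 1)) := fun b hb => by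
      rw [prod_Ioc_succ_top (mem_Icc.1 hb).2, mul_assoc]
    rw [sum_Icc_succ_top (by omega), prod_Icc_succ_top (by omega), Ioc_self, prod_empty,
      sum_congr rfl hstep, ← sum_mul, ih]
    ring

theorem prod_Ioc_one_sub_le_pow {γ : ℕ → ℝ} {d c : ℕ} (hle : ∀ q ∈ Ioc d c, γ q ≤ 1)
    (hge : ∀ q ∈ Ioc d c, γ c ≤ γ q) :
    ∏ q ∈ Ioc d c, (1 - γ q) ≤ (1 - γ c) ^ (c - d) := by
  calc ∏ q ∈ Ioc d c, (1 - γ q) ≤ ∏ _q ∈ Ioc d c, (1 - γ c) :=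
        prod_le_prod (fun q hq => sub_nonneg.2 (hle q hq)) fun q hq => sub_le_sub_left (hge q hq) 1
    _ = (1 - γ c) ^ (c - d) := by rw [prod_const, Nat.card_Ioc]

section OldIteratesWeight

variable {γ : ℕ → ℝ} (hγle : ∀ b, 1 ≤ b → γ b ≤ 1)
include hγle

theorem oldIteratesWeight_nonneg (hγnonneg : ∀ b, 1 ≤ b → 0 ≤ γ b) (d c : ℕ) :
    0 ≤ oldIteratesWeight γ d c := by
  refine sum_nonneg fun b hb => mul_nonneg (hγnonneg b (mem_Icc.1 hb).1) ?_
  exact prod_nonneg fun q hq => sub_nonneg.2 (hγle q (by grind))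

theorem oldIteratesWeight_le_pow (hanti : AntitoneOn γ (Set.Ici 1)) {d c : ℕ} (hdc : d ≤ c) :
    oldIteratesWeight γ d c ≤ (1 - γ c) ^ (c - d) := by
  have hfactor : ∀ q, 1 ≤ q → 0 ≤ 1 - γ q := fun q hq => sub_nonneg.2 (hγle q hq)
  have htail : ∏ q ∈ Ioc d c, (1 - γ q) ≤ (1 - γ c) ^ (c - d) :=
    prod_Ioc_one_sub_le_pow (fun q hq => hγle q (by grind))
      fun q hq => hanti (Set.mem_Ici.2 (by grind)) (Set.mem_Ici.2 (by grind)) (mem_Ioc.1 hq).2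
  calc oldIteratesWeight γ d c
      = (∑ b ∈ Icc 1 d, γ b * ∏ q ∈ Ioc b d, (1 - γ q)) * ∏ q ∈ Ioc d c, (1 - γ q) := by
        rw [oldIteratesWeight, sum_mul]
        refine sum_congr rfl fun b hb => ?_
        rw [Icc_add_one_left_eq_Ioc, ← prod_Ioc_consecutive _ (mem_Icc.1 hb).2 hdc, mul_assoc]
    _ = (1 - ∏ q ∈ Icc 1 d, (1 - γ q)) * ∏ q ∈ Ioc d c, (1 - γ q) := by
        rw [sum_mul_prod_Ioc_one_sub]
    _ ≤ 1 * (1 - γ c) ^ (c - d) := by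
        refine mul_le_mul ?_ htail (prod_nonneg fun q hq => hfactor q (by grind)) zero_le_one
        linarith [prod_nonneg fun q (hq : q ∈ Icc 1 d) => hfactor q (mem_Icc.1 hq).1]
    _ = (1 - γ c) ^ (c - d) := one_mul _

end OldIteratesWeight

theorem one_sub_pow_le_exp_neg_mul (x : ℝ) (hx : x ≤ 1) (n : ℕ) :
    (1 - x) ^ n ≤ exp (-(n * x)) := by
  calc (1 - x) ^ n ≤ exp (-x) ^ n := pow_le_pow_left₀ (by linarith) (one_sub_le_exp_neg x) n
    _ = exp (-(n * x)) := by rw [← exp_nat_mul, mul_neg]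

theorem rpow_sub_sub_one_le_floor_rpow_mul_rpow_neg {x v : ℝ} (hx : 1 ≤ x) (hv : 0 ≤ v) (ν : ℝ) :
    x ^ (ν - v) - 1 ≤ ⌊x ^ ν⌋₊ * x ^ (-v) := by
  have hx0 : 0 < x := by linarith
  have hfloor : x ^ ν - 1 ≤ ⌊x ^ ν⌋₊ := by linarith [Nat.lt_floor_add_one (x ^ ν)]
  have hrpow_le_one : x ^ (-v) ≤ 1 := rpow_le_one_of_one_le_of_nonpos hx (by linarith)
  calc x ^ (ν - v) - 1 ≤ (x ^ ν - 1) * x ^ (-v) := by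
        rw [sub_mul, one_mul, ← rpow_add hx0, ← sub_eq_add_neg]
        linarith
    _ ≤ ⌊x ^ ν⌋₊ * x ^ (-v) := mul_le_mul_of_nonneg_right hfloor (rpow_nonneg hx0.le _)

theorem one_sub_rpow_neg_pow_floor_div_le {x v : ℝ} (hx : 1 ≤ x) (hv : 0 ≤ v) (ν : ℝ) :
    (1 - x ^ (-v)) ^ ⌊x ^ ν⌋₊ / x ^ (-v) ≤ exp 1 * x ^ v * exp (-x ^ (ν - v)) := by
  have hx0 : 0 < x := by linarith
  have hpow : (1 - x ^ (-v)) ^ ⌊x ^ ν⌋₊ ≤ exp (1 + -x ^ (ν - v)) :=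
    (one_sub_pow_le_exp_neg_mul _ (rpow_le_one_of_one_le_of_nonpos hx (by linarith)) _).trans
      (exp_le_exp.2 (by linarith [rpow_sub_sub_one_le_floor_rpow_mul_rpow_neg hx hv ν]))
  rw [div_eq_mul_inv, ← rpow_neg hx0.le, neg_neg]
  calc (1 - x ^ (-v)) ^ ⌊x ^ ν⌋₊ * x ^ v ≤ exp (1 + -x ^ (ν - v)) * x ^ v :=
        mul_le_mul_of_nonneg_right hpow (rpow_nonneg hx0.le v)
    _ = exp 1 * x ^ v * exp (-x ^ (ν - v)) := by rw [exp_add]; ring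

theorem tendsto_rpow_mul_exp_neg_rpow_atTop_nhds_zero (s : ℝ) {δ : ℝ} (hδ : 0 < δ) :
    Tendsto (fun x : ℝ => x ^ s * exp (-x ^ δ)) atTop (𝓝 0) := by
  have h := (tendsto_rpow_mul_exp_neg_mul_atTop_nhds_zero (s / δ) 1 one_pos).comp
    (tendsto_rpow_atTop hδ)
  refine h.congr' ?_
  filter_upwards [eventually_ge_atTop 0] with x hx
  rw [Function.comp_apply, ← rpow_mul hx, mul_div_cancel₀ s hδ.ne', neg_one_mul]

theorem tendsto_pow_mul_of_le_rpow_mul_exp_neg_rpow {u : ℕ → ℝ} {K v δ : ℝ} (hδ : 0 < δ)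
    (hnonneg : ∀ c, 0 ≤ u c) (hle : ∀ᶠ c in atTop, u c ≤ K * (c : ℝ) ^ v * exp (-(c : ℝ) ^ δ))
    (m : ℕ) : Tendsto (fun c : ℕ => (c : ℝ) ^ m * u c) atTop (𝓝 0) := by
  have hbound := ((tendsto_rpow_mul_exp_neg_rpow_atTop_nhds_zero (m + v) hδ).comp
    tendsto_natCast_atTop_atTop).const_mul K
  rw [mul_zero] at hbound
  refine squeeze_zero' (Eventually.of_forall fun c => mul_nonneg (by positivity) (hnonneg c))
    ?_ hbound
  filter_upwards [hle, eventually_ge_atTop 1] with c hc hc1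
  have hc0 : (0 : ℝ) < c := by exact_mod_cast hc1
  calc (c : ℝ) ^ m * u c ≤ (c : ℝ) ^ m * (K * (c : ℝ) ^ v * exp (-(c : ℝ) ^ δ)) :=
        mul_le_mul_of_nonneg_left hc (by positivity)
    _ = K * ((c : ℝ) ^ ((m : ℝ) + v) * exp (-(c : ℝ) ^ δ)) := by
        rw [rpow_add hc0, rpow_natCast]; ring

theorem floor_rpow_lt_self {c : ℕ} (hc : 2 ≤ c) {ν : ℝ} (hν : ν < 1) : ⌊(c : ℝ) ^ ν⌋₊ < c := by
  rw [Nat.floor_lt (rpow_nonneg c.cast_nonneg ν)]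
  exact rpow_lt_self_of_one_lt (by exact_mod_cast hc) hν

/-- Weight of old iterates under exponentially-forgetting averaging: for a nonincreasing
sequence of step sizes `γ_b ∈ (0,1]`, `∑_{b=1}^d γ_b ∏_{p=b+1}^c (1 − γ_p) ≤ (1−γ_c)^{c−d}/γ_c`;
moreover for `γ_c = c^{−v}` with `0 < v < ν < 1` and `d_c = c − ⌊c^ν⌋ ≥ 1`, this sum is at most
`e·c^v·exp(−c^{ν−v})`, hence tends to `0` faster than any power of `c`. -/
theorem old_iterates_weight_bound
    (γ : ℕ → ℝ)
    (hγpos : ∀ b, 1 ≤ b → 0 < γ b) (hγle : ∀ b, 1 ≤ b → γ b ≤ 1)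
    (hmono : ∀ b b', 1 ≤ b → b ≤ b' → γ b' ≤ γ b) :
    (∀ d c : ℕ, 1 ≤ d → d ≤ c →
      ∑ b ∈ Finset.Icc 1 d, γ b * ∏ q ∈ Finset.Icc (b + 1) c, (1 - γ q) ≤
        (1 - γ c) ^ (c - d) / γ c) ∧
    (∀ v ν : ℝ, 0 < v → v < 1 → v < ν → ν < 1 →
      (∀ c : ℕ, 1 ≤ c → γ c = (c : ℝ) ^ (-v)) →
      (∀ c : ℕ, 1 ≤ c - ⌊(c : ℝ) ^ ν⌋₊ →
        ∑ b ∈ Finset.Icc 1 (c - ⌊(c : ℝ) ^ ν⌋₊),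
            γ b * ∏ q ∈ Finset.Icc (b + 1) c, (1 - γ q) ≤
          Real.exp 1 * (c : ℝ) ^ v * Real.exp (-(c : ℝ) ^ (ν - v))) ∧
      ∀ m : ℕ,
        Filter.Tendsto
          (fun c : ℕ => (c : ℝ) ^ m *
            ∑ b ∈ Finset.Icc 1 (c - ⌊(c : ℝ) ^ ν⌋₊),
              γ b * ∏ q ∈ Finset.Icc (b + 1) c, (1 - γ q))
          Filter.atTop (nhds 0)) := by
  have hγnonneg : ∀ b, 1 ≤ b → 0 ≤ γ b := fun b hb => (hγpos b hb).le
  have hanti : AntitoneOn γ (Set.Ici 1) := fun b hb _ _ hbb' => hmono b _ hb hbb'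
  have hpart1 : ∀ d c : ℕ, 1 ≤ d → d ≤ c → oldIteratesWeight γ d c ≤ (1 - γ c) ^ (c - d) / γ c :=
    fun d c hd hdc => (oldIteratesWeight_le_pow hγle hanti hdc).trans <|
      le_div_self (pow_nonneg (sub_nonneg.2 (hγle c (by omega))) _) (hγpos c (by omega))
        (hγle c (by omega))
  refine ⟨hpart1, fun v ν hv _ hvν hν hγ => ?_⟩
  have hpart2 : ∀ c : ℕ, 1 ≤ c - ⌊(c : ℝ) ^ ν⌋₊ → oldIteratesWeight γ (c - ⌊(c : ℝ) ^ ν⌋₊) c ≤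
      exp 1 * (c : ℝ) ^ v * exp (-(c : ℝ) ^ (ν - v)) := fun c hc => by
    have hc1 : 1 ≤ c := hc.trans (Nat.sub_le _ _)
    have hweight := hpart1 _ c hc (Nat.sub_le _ _)
    rw [Nat.sub_sub_self (by omega), hγ c hc1] at hweight
    exact hweight.trans (one_sub_rpow_neg_pow_floor_div_le (by exact_mod_cast hc1) hv.le ν)
  refine ⟨hpart2, tendsto_pow_mul_of_le_rpow_mul_exp_neg_rpow
    (u := fun c => oldIteratesWeight γ (c - ⌊(c : ℝ) ^ ν⌋₊) c) (K := exp 1) (v := v)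
    (sub_pos.2 hvν) (fun c => oldIteratesWeight_nonneg hγle hγnonneg _ c) ?_⟩
  filter_upwards [eventually_ge_atTop 2] with c hc
  exact hpart2 c (by have := floor_rpow_lt_self hc hν; omega)
end

section
/- Let Θ ⊆ ℝ^K be a nonempty set, T ≥ 2 an integer, and let (w_s)_{1≤s≤T} ⊂ (0,1] with w_1 = 1. For 1 ≤ s ≤ T let f_s, g_s : ℝ^K → ℝ, let ε_s ≥ 0, and define recursively f̄_1 = f_1, f̄_s = (1−w_s)f̄_{s−1} + w_s f_s; ḡ_1 = g_1, ḡ_s = (1−w_s)ḡ_{s−1} + w_s g_s; ε̄_1 = ε_1, ε̄_s = (1−w_s)ε̄_{s−1} + w_s ε_s. Suppose that for every 1 ≤ s ≤ T and every θ ∈ Θ, g_s(θ) ≥ f_s(θ) − ε_s. Then: (i) for every 1 ≤ s ≤ T and θ ∈ Θ, f̄_s(θ) − ḡ_s(θ) ≤ ε̄_s. (ii) If moreover θ_{T−1}, θ_T ∈ Θ satisfy g_T(θ_{T−1}) ≤ f_T(θ_{T−1}) + ε_T and ḡ_T(θ_T) ≤ ḡ_T(θ_{T−1}), then ḡ_T(θ_T)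 − ḡ_{T−1}(θ_{T−1}) ≤ w_T·(f_T(θ_{T−1}) − f̄_{T−1}(θ_{T−1})) + w_T·(ε̄_{T−1} + ε_T). -/
/-- Aggregation of approximate majorization: (i) the aggregated surrogate `ḡ_s` is an
`ε̄_s`-approximate majorant of the aggregated loss `f̄_s` on `Θ`; (ii) the key one-step
inequality on the variation of `ḡ_T(θ_T)`. -/
theorem approximate_majorization_aggregation
    {K : ℕ} (Θ : Set (EuclideanSpace ℝ (Fin K))) (hΘ : Θ.Nonempty)
    (T : ℕ) (hT : 2 ≤ T)
    (w : ℕ → ℝ)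
    (hw0 : ∀ s, 1 ≤ s → s ≤ T → 0 < w s) (hwle : ∀ s, 1 ≤ s → s ≤ T → w s ≤ 1)
    (hw1 : w 1 = 1)
    (f g : ℕ → EuclideanSpace ℝ (Fin K) → ℝ)
    (ε : ℕ → ℝ) (hε : ∀ s, 1 ≤ s → s ≤ T → 0 ≤ ε s)
    (fbar gbar : ℕ → EuclideanSpace ℝ (Fin K) → ℝ) (ebar : ℕ → ℝ)
    (hf1 : fbar 1 = f 1) (hg1 : gbar 1 = g 1) (he1 : ebar 1 = ε 1)
    (hfrec : ∀ s, 2 ≤ s → s ≤ T → ∀ θ,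
      fbar s θ = (1 - w s) * fbar (s - 1) θ + w s * f s θ)
    (hgrec : ∀ s, 2 ≤ s → s ≤ T → ∀ θ,
      gbar s θ = (1 - w s) * gbar (s - 1) θ + w s * g s θ)
    (herec : ∀ s, 2 ≤ s → s ≤ T → ebar s = (1 - w s) * ebar (s - 1) + w s * ε s)
    (hmaj : ∀ s, 1 ≤ s → s ≤ T → ∀ θ ∈ Θ, f s θ - ε s ≤ g s θ) :
    (∀ s, 1 ≤ s → s ≤ T → ∀ θ ∈ Θ, fbar s θ - gbar s θ ≤ ebar s) ∧
    (∀ θprev θT : EuclideanSpace ℝ (Fin K), θprev ∈ Θ → θT ∈ Θ →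
      g T θprev ≤ f T θprev + ε T →
      gbar T θT ≤ gbar T θprev →
      gbar T θT - gbar (T - 1) θprev ≤
        w T * (f T θprev - fbar (T - 1) θprev) + w T * (ebar (T - 1) + ε T)) := by
  have part1 : ∀ s, 1 ≤ s → s ≤ T → ∀ θ ∈ Θ, fbar s θ - gbar s θ ≤ ebar s := by
    intro s hs
    induction s, hs using Nat.le_induction with
    | base =>
      intro _ θ hθ
      rw [hf1, hg1, he1]
      have := hmaj 1 le_rfl (by omega) θ hθ
      linarith
    | succ s hs ih =>
      intro hsT θ hθ
      have hsT' : s ≤ T := by omega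
      have h2 : 2 ≤ s + 1 := by omega
      have hrw : s + 1 - 1 = s := by omega
      have hf := hfrec (s+1) h2 hsT θ
      have hg := hgrec (s+1) h2 hsT θ
      have he := herec (s+1) h2 hsT
      rw [hrw] at hf hg he
      have hih := ih hsT' θ hθ
      have hm := hmaj (s+1) (by omega) hsT θ hθ
      have hw : 0 ≤ 1 - w (s+1) := by linarith [hwle (s+1) (by omega) hsT]
      have hwpos : 0 < w (s+1) := hw0 (s+1) (by omega) hsT
      nlinarith [mul_le_mul_of_nonneg_left hih hw]
  refine ⟨part1, ?_⟩
  intro θprev θT hp hT' hgt hdec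
  have hgT := hgrec T hT le_rfl θprev
  have h1 : fbar (T-1) θprev - gbar (T-1) θprev ≤ ebar (T-1) :=
    part1 (T-1) (by omega) (by omega) θprev hp
  have hwpos : 0 < w T := hw0 T (by omega) le_rfl
  nlinarith
end
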